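/- arXiv:1204.5194 — 2 statements merged into one kernel-verified Lean document; each statement's English description precedes it below -/
import Mathlib

section
/- Every finite graph G satisfies ⌈log₂(L+2)⌉ ≤ td(G) ≤ L + 1, where L is the number of edges of a longest path in G and td(G) is the tree-depth of G. -/
/-
Lower bound: if `G ⊆ cl(F)` with `F` of height `h`, pick a vertex `x` of least depth on a path `P`.
Every edge joins a vertex to one of its descendants, so walking along `P` from `x` without
going above `x` never leaves the subtree of `x`; hence `P` minus `x` splits into two paths lying
strictly below `x`, and induction on the remaining height gives `|P| ≤ 2^(h+1) - 1` vertices.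

Upper bound: among rooted forests whose parent edges are edges of `G` (their depths are at most
`L`, since the way up to a root is a path of `G`), take one with maximal total depth. If an edge
`uv` with `depth v ≤ depth u` joined two incomparable vertices, hanging the subtree of `v` below
`u` would increase the total depth; so every edge of `G` is an ancestor–descendant pair.
-/

/-- A rooted forest on the vertex type `V`, given by a parent function and a
depth (distance to the root) function; roots are their own parents. -/
structure RForest (V : Type*) where
  parent : V → V
  depth : V → ℕ
  parent_depth : ∀ v, depth v ≠ 0 → depth (parent v) = depth v - 1
  root_parent : ∀ v, depth v = 0 → parent v = v

/-- `F.Anc u v`: `u` is a proper ancestor of `v` in the rooted forest `F`. -/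
def RForest.Anc {V : Type*} (F : RForest V) (u v : V) : Prop :=
  ∃ k : ℕ, 0 < k ∧ k ≤ F.depth v ∧ F.parent^[k] v = u

/-- `InClosure G F`: `G` is a subgraph of the closure cl(F) of the rooted
forest `F`, i.e. every edge of `G` joins a vertex to one of its descendants. -/
def InClosure {V : Type*} (G : SimpleGraph V) (F : RForest V) : Prop :=
  ∀ u v : V, G.Adj u v → F.Anc u v ∨ F.Anc v u

/-- The tree-depth of `G`: one more than the least height of a rooted forest
whose closure contains `G` as a subgraph. -/
noncomputable def treedepth {V : Type*} (G : SimpleGraph V) : ℕ :=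
  1 + sInf {h : ℕ | ∃ F : RForest V, (∀ v, F.depth v ≤ h) ∧ InClosure G F}

namespace RForest

variable {V : Type*} {F : RForest V} {x y z : V}

lemma depth_iterate_parent {k : ℕ} {v : V} (h : k ≤ F.depth v) :
    F.depth (F.parent^[k] v) = F.depth v - k := by
  induction k with
  | zero => simp
  | succ k ih =>
    have hk := ih (by omega)
    rw [Function.iterate_succ_apply', F.parent_depth _ (by omega), hk]
    omega

variable (F) in
def AncOrSelf (x y : V) : Prop :=
  F.depth x ≤ F.depth y ∧ F.parent^[F.depth y - F.depth x] y = x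

lemma AncOrSelf.refl (x : V) : F.AncOrSelf x x := ⟨le_rfl, by simp⟩

lemma AncOrSelf.depth_lt (h : F.AncOrSelf x y) (hne : y ≠ x) : F.depth x < F.depth y := by
  refine lt_of_le_of_ne h.1 fun hd => hne ?_
  simpa [hd] using h.2

lemma AncOrSelf.anc (h : F.AncOrSelf x y) (hne : y ≠ x) : F.Anc x y :=
  have := h.depth_lt hne
  ⟨F.depth y - F.depth x, by omega, by omega, h.2⟩

lemma AncOrSelf.trans_anc (hxy : F.AncOrSelf x y) (hyz : F.Anc y z) : F.AncOrSelf x z := by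
  obtain ⟨k, -, hkz, rfl⟩ := hyz
  have hdy := F.depth_iterate_parent hkz
  have := hxy.1
  refine ⟨by omega, ?_⟩
  rw [show F.depth z - F.depth x = (F.depth (F.parent^[k] z) - F.depth x) + k by omega,
    Function.iterate_add_apply, hxy.2]

lemma AncOrSelf.of_anc (hxy : F.AncOrSelf x y) (hzy : F.Anc z y) (hz : F.depth x ≤ F.depth z) :
    F.AncOrSelf x z := by
  obtain ⟨k, -, hky, rfl⟩ := hzy
  have hdz := F.depth_iterate_parent hky
  have := hxy.1
  refine ⟨hz, ?_⟩
  rw [← Function.iterate_add_apply]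
  convert hxy.2 using 2
  omega

lemma AncOrSelf.parent (h : F.AncOrSelf x y) (hne : y ≠ x) : F.AncOrSelf x (F.parent y) := by
  have hlt := h.depth_lt hne
  have hdp := F.parent_depth y (by omega)
  refine ⟨by omega, ?_⟩
  rw [← Function.iterate_succ_apply]
  convert h.2 using 2
  omega

lemma AncOrSelf.of_parent (hy : F.depth y ≠ 0) (h : F.AncOrSelf x (F.parent y)) :
    F.AncOrSelf x y := by
  have hdp := F.parent_depth y hy
  have := h.1
  refine ⟨by omega, ?_⟩
  rw [show F.depth y - F.depth x = (F.depth (F.parent y) - F.depth x) + 1 by omega,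
    Function.iterate_succ_apply]
  exact h.2

end RForest

open SimpleGraph RForest

section LowerBound

variable {V : Type*} {G : SimpleGraph V} {F : RForest V}

lemma InClosure.ancOrSelf_iff_of_adj (hcl : InClosure G F) {x a b : V} (hab : G.Adj a b)
    (ha : F.depth x ≤ F.depth a) (hb : F.depth x ≤ F.depth b) :
    F.AncOrSelf x a ↔ F.AncOrSelf x b := by
  have key : ∀ {a b : V}, G.Adj a b → F.depth x ≤ F.depth b →
      F.AncOrSelf x a → F.AncOrSelf x b := fun hab hb hxa =>
    (hcl _ _ hab).elim hxa.trans_anc fun hba => hxa.of_anc hba hb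
  exact ⟨key hab hb, key hab.symm ha⟩

lemma InClosure.ancOrSelf_iff_of_mem_support (hcl : InClosure G F) {x a b : V}
    (p : G.Walk a b) (hp : ∀ y ∈ p.support, F.depth x ≤ F.depth y) :
    ∀ y ∈ p.support, (F.AncOrSelf x y ↔ F.AncOrSelf x a) := by
  induction p with
  | nil => simp
  | cons hab q ih =>
    simp only [Walk.support_cons, List.mem_cons, forall_eq_or_imp] at hp
    simp only [Walk.support_cons, List.mem_cons, forall_eq_or_imp, iff_self, true_and]
    intro y hy
    rw [ih hp.2 y hy, hcl.ancOrSelf_iff_of_adj hab hp.1 (hp.2 _ q.start_mem_support)]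

lemma InClosure.ancOrSelf_of_mem_support (hcl : InClosure G F) {x a b : V} (p : G.Walk a b)
    (hx : x ∈ p.support) (hp : ∀ y ∈ p.support, F.depth x ≤ F.depth y) :
    ∀ y ∈ p.support, F.AncOrSelf x y := fun y hy =>
  (hcl.ancOrSelf_iff_of_mem_support p hp y hy).2
    ((hcl.ancOrSelf_iff_of_mem_support p hp x hx).1 (AncOrSelf.refl x))

theorem InClosure.length_add_two_le_two_pow (hcl : InClosure G F) {h : ℕ}
    (hF : ∀ v, F.depth v ≤ h) (k : ℕ) {a b : V} (p : G.Walk a b) (hp : p.IsPath)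
    (hk : ∀ y ∈ p.support, h < F.depth y + k) : p.length + 2 ≤ 2 ^ k := by
  classical
  induction k generalizing a b with
  | zero => exact absurd (hk a p.start_mem_support) (by simpa using hF a)
  | succ k ih =>
    obtain ⟨x, hx, hmin⟩ := p.support.toFinset.exists_min_image F.depth ⟨a, by simp⟩
    simp only [List.mem_toFinset] at hx hmin
    have hbelow := hcl.ancOrSelf_of_mem_support p hx hmin
    have hside : ∀ {c : V} (w : G.Walk x c), w.IsPath → w.support ⊆ p.support →
        w.length + 1 ≤ 2 ^ k := by
      intro c w hw hsub
      cases w with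
      | nil => simpa using Nat.one_le_two_pow
      | cons hxs q =>
        rw [Walk.cons_isPath_iff] at hw
        have hq := ih q hw.1 fun y hy => by
          have hlt := (hbelow y (hsub (List.mem_cons_of_mem _ hy))).depth_lt
            (ne_of_mem_of_not_mem hy hw.2)
          have := hk x hx
          omega
        rw [Walk.length_cons]
        omega
    have ht := hside (p.takeUntil x hx).reverse (hp.takeUntil hx).reverse
      (by simpa using p.support_takeUntil_subset_support hx)
    have hd := hside (p.dropUntil x hx) (hp.dropUntil hx) (p.support_dropUntil_subset_support hx)
    have hlen : (p.takeUntil x hx).length + (p.dropUntil x hx).length = p.length := by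
      rw [← Walk.length_append, p.take_spec hx]
    rw [Walk.length_reverse] at ht
    rw [pow_succ]
    omega

end LowerBound

section UpperBound

variable {V : Type*} {G : SimpleGraph V} {F : RForest V}

namespace RForest

variable (F) in
def ParentAdj (G : SimpleGraph V) : Prop :=
  ∀ v, F.depth v ≠ 0 → G.Adj (F.parent v) v

lemma ParentAdj.exists_isPath_length_eq_depth (hF : F.ParentAdj G) (v : V) :
    ∃ (r : V) (w : G.Walk v r), w.IsPath ∧ w.length = F.depth v := by
  suffices ∀ n v, F.depth v = n → ∃ (r : V) (w : G.Walk v r),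
      w.IsPath ∧ w.length = n ∧ ∀ y ∈ w.support, F.depth y ≤ n by
    obtain ⟨r, w, hw, hlen, -⟩ := this _ v rfl
    exact ⟨r, w, hw, hlen⟩
  intro n
  induction n with
  | zero => exact fun v hv => ⟨v, .nil, .nil, rfl, by simp [hv]⟩
  | succ n ih =>
    intro v hv
    have hdp := F.parent_depth v (by omega)
    obtain ⟨r, w, hw, hlen, hsup⟩ := ih (F.parent v) (by omega)
    refine ⟨r, .cons (hF v (by omega)).symm w, ?_, by simp [hlen], ?_⟩
    · exact hw.cons fun hv' => by have := hsup v hv'; omega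
    · simp only [Walk.support_cons, List.mem_cons, forall_eq_or_imp]
      exact ⟨hv.le, fun y hy => by have := hsup y hy; omega⟩

open Classical in
/-- Hang the subtree of `v` below `u`. -/
noncomputable def reattach (F : RForest V) (u v : V) (hvu : ¬F.AncOrSelf v u) : RForest V where
  parent w := if w = v then u else F.parent w
  depth w := if F.AncOrSelf v w then F.depth w - F.depth v + F.depth u + 1 else F.depth w
  parent_depth w hw := by
    by_cases hwv : w = v
    · subst hwv
      simp [AncOrSelf.refl, hvu]
    by_cases hvw : F.AncOrSelf v w
    · have hlt := hvw.depth_lt hwv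
      have hdp := F.parent_depth w (by omega)
      simp only [hwv, hvw, hvw.parent hwv, if_true, if_false]
      omega
    · have hw' : F.depth w ≠ 0 := by simpa [hvw] using hw
      have hvp : ¬F.AncOrSelf v (F.parent w) := fun h => hvw (h.of_parent hw')
      simp only [hwv, hvw, hvp, if_false]
      exact F.parent_depth w hw'
  root_parent w hw := by
    have hvw : ¬F.AncOrSelf v w := fun h => by simp [h] at hw
    have hwv : w ≠ v := by rintro rfl; exact hvw (AncOrSelf.refl w)
    simp only [hwv, if_false]
    exact F.root_parent w (by simpa [hvw] using hw)

lemma sum_depth_lt_reattach [Fintype V] {u v : V} (hvu : ¬F.AncOrSelf v u)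
    (hle : F.depth v ≤ F.depth u) : ∑ w, F.depth w < ∑ w, (F.reattach u v hvu).depth w := by
  refine Finset.sum_lt_sum (fun w _ => ?_) ⟨v, Finset.mem_univ v, ?_⟩
  · by_cases hvw : F.AncOrSelf v w
    · have := hvw.1
      simp only [reattach, hvw, if_true]
      omega
    · simp [reattach, hvw]
  · simp only [reattach, AncOrSelf.refl, if_true]
    omega

lemma ParentAdj.reattach (hF : F.ParentAdj G) {u v : V} (huv : G.Adj u v)
    (hvu : ¬F.AncOrSelf v u) : (F.reattach u v hvu).ParentAdj G := by
  intro w hw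
  by_cases hwv : w = v
  · simpa [RForest.reattach, hwv] using huv
  simp only [RForest.reattach, hwv, if_false]
  refine hF w ?_
  by_cases hvw : F.AncOrSelf v w
  · have := hvw.depth_lt hwv
    omega
  · simpa [RForest.reattach, hvw] using hw

lemma ParentAdj.inClosure_of_forall_sum_depth_le [Fintype V] (hF : F.ParentAdj G)
    (hmax : ∀ F' : RForest V, F'.ParentAdj G → ∑ w, F'.depth w ≤ ∑ w, F.depth w) :
    InClosure G F := by
  suffices ∀ u v, G.Adj u v → F.depth v ≤ F.depth u → F.Anc u v ∨ F.Anc v u by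
    intro u v huv
    rcases le_total (F.depth v) (F.depth u) with hle | hle
    · exact this u v huv hle
    · exact (this v u huv.symm hle).symm
  intro u v huv hle
  by_contra hnc
  have hvu : ¬F.AncOrSelf v u := fun h => hnc (.inr (h.anc huv.ne))
  exact (hmax _ (hF.reattach huv hvu)).not_gt (sum_depth_lt_reattach hvu hle)

end RForest

theorem exists_inClosure_of_forall_isPath_length_le [Fintype V] {L : ℕ}
    (hL : ∀ (a b : V) (p : G.Walk a b), p.IsPath → p.length ≤ L) :
    ∃ F : RForest V, (∀ v, F.depth v ≤ L) ∧ InClosure G F := by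
  have hdepth : ∀ F : RForest V, F.ParentAdj G → ∀ v, F.depth v ≤ L := fun F hF v => by
    obtain ⟨r, w, hw, hlen⟩ := hF.exists_isPath_length_eq_depth v
    exact hlen ▸ hL v r w hw
  obtain ⟨_, ⟨F, hF, rfl⟩, hmax⟩ := BddAbove.exists_isGreatest_of_nonempty
    (S := (fun F : RForest V => ∑ w, F.depth w) '' {F | F.ParentAdj G})
    ⟨∑ _ : V, L, by rintro _ ⟨F, hF, rfl⟩; exact Finset.sum_le_sum fun v _ => hdepth F hF v⟩
    ⟨_, ⟨id, fun _ => 0, fun _ h => absurd rfl h, fun _ _ => rfl⟩, fun _ h => absurd rfl h, rfl⟩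
  exact ⟨F, hdepth F hF, hF.inClosure_of_forall_sum_depth_le fun F' hF' => hmax ⟨F', hF', rfl⟩⟩

end UpperBound

/-- For a finite graph G with longest path of length L (number of edges):
⌈log₂(L+2)⌉ ≤ td(G) ≤ L + 1. -/
theorem stmt13 {V : Type*} [Fintype V] (G : SimpleGraph V) (L : ℕ)
    (hL : IsGreatest {n : ℕ | ∃ (u v : V) (w : G.Walk u v), w.IsPath ∧ w.length = n} L) :
    Nat.clog 2 (L + 2) ≤ treedepth G ∧ treedepth G ≤ L + 1 := by
  obtain ⟨⟨u, v, p, hp, rfl⟩, hmax⟩ := hL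
  obtain ⟨F₀, hF₀, hcl₀⟩ :=
    exists_inClosure_of_forall_isPath_length_le fun a b q hq => hmax ⟨a, b, q, hq, rfl⟩
  set S := {h : ℕ | ∃ F : RForest V, (∀ v, F.depth v ≤ h) ∧ InClosure G F}
  have hLS : p.length ∈ S := ⟨F₀, hF₀, hcl₀⟩
  obtain ⟨F, hF, hcl⟩ := Nat.sInf_mem ⟨_, hLS⟩
  have hpath := hcl.length_add_two_le_two_pow hF (sInf S + 1) p hp fun y _ => by omega
  have htd : treedepth G = sInf S + 1 := add_comm _ _
  rw [htd, Nat.clog_le_iff_le_pow one_lt_two]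
  exact ⟨hpath, by simpa using Nat.sInf_le hLS⟩
end

section
/- If G is a subgraph of the closure cl(F) of a rooted forest F of height h, then G contains no path with more than 2^{h+1} − 2 edges; equivalently, a path on n vertices has tree-depth at least ⌈log₂(n+1)⌉. -/
/-!
Closure edges join an ancestor to a descendant, so along a walk whose vertices all have depth at
least `d` the depth-`d` ancestor never changes. Hence a path with all depths in `[d, d + n)` meets
depth `d` in at most one vertex, and on either side of it the path lives in depths
`[d + 1, d + n)`; by induction such a path has at most `2 ^ n - 1` vertices. For the path graph
the forest `0 ← 1 ← ⋯ ← n - 1` shows that the infimum defining `treedepth` is attained, and the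
bound for an optimal forest gives the estimate.
-/

open SimpleGraph Walk

namespace RForest

variable {V : Type*} (F : RForest V)

theorem depth_parent_iterate (v : V) (k : ℕ) : F.depth (F.parent^[k] v) = F.depth v - k := by
  induction k with
  | zero => rfl
  | succ k ih =>
    rw [Function.iterate_succ_apply']
    by_cases h0 : F.depth (F.parent^[k] v) = 0
    · rw [F.root_parent _ h0]
      omega
    · rw [F.parent_depth _ h0]
      omega

/-- The ancestor of `x` at depth `d` (junk `x` itself when `F.depth x < d`). -/
def ancAt (d : ℕ) (x : V) : V :=
  F.parent^[F.depth x - d] x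

theorem ancAt_of_depth_eq {d : ℕ} {x : V} (hx : F.depth x = d) : F.ancAt d x = x := by
  simp [ancAt, hx]

variable {F}

theorem Anc.ancAt_eq {d : ℕ} {u v : V} (h : F.Anc u v) (hd : d ≤ F.depth u) :
    F.ancAt d u = F.ancAt d v := by
  obtain ⟨k, -, hkv, rfl⟩ := h
  rw [F.depth_parent_iterate] at hd
  rw [ancAt, ancAt, F.depth_parent_iterate, ← Function.iterate_add_apply]
  congr 1
  omega

end RForest

section Closure

variable {V : Type*} {G : SimpleGraph V} {F : RForest V}

theorem InClosure.ancAt_eq_of_mem_support (hsub : InClosure G F) {d : ℕ} {u v : V}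
    (w : G.Walk u v) (hw : ∀ x ∈ w.support, d ≤ F.depth x) {x : V} (hx : x ∈ w.support) :
    F.ancAt d x = F.ancAt d u := by
  induction w with
  | nil => rw [List.mem_singleton.mp hx]
  | @cons a b _ hab w ih =>
    have hba : F.ancAt d b = F.ancAt d a := by
      rcases hsub a b hab with h | h
      · exact (h.ancAt_eq (hw a (by simp))).symm
      · exact h.ancAt_eq (hw b (by simp))
    rcases List.mem_cons.mp hx with rfl | hx
    · rfl
    · rw [ih (fun y hy => hw y (List.mem_cons_of_mem _ hy)) hx, hba]

theorem InClosure.eq_of_mem_support_of_depth_eq (hsub : InClosure G F) {d : ℕ} {u v : V}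
    (w : G.Walk u v) (hw : ∀ x ∈ w.support, d ≤ F.depth x) {x y : V} (hx : x ∈ w.support)
    (hy : y ∈ w.support) (hxd : F.depth x = d) (hyd : F.depth y = d) : x = y := by
  rw [← F.ancAt_of_depth_eq hxd, ← F.ancAt_of_depth_eq hyd,
    hsub.ancAt_eq_of_mem_support w hw hx, hsub.ancAt_eq_of_mem_support w hw hy]

theorem InClosure.length_add_two_le_of_depth_mem (hsub : InClosure G F) (n : ℕ) :
    ∀ (d : ℕ) {u v : V} (w : G.Walk u v), w.IsPath →
      (∀ x ∈ w.support, d ≤ F.depth x ∧ F.depth x < d + n) → w.length + 2 ≤ 2 ^ n := by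
  induction n with
  | zero =>
    intro d u v w _ hdep
    have := hdep u w.start_mem_support
    omega
  | succ n ih =>
    intro d u v w hw hdep
    by_cases hdeep : ∀ x ∈ w.support, d + 1 ≤ F.depth x
    · have := ih (d + 1) w hw fun x hx => ⟨hdeep x hx, by have := hdep x hx; omega⟩
      rw [pow_succ]
      omega
    push Not at hdeep
    obtain ⟨v₀, hv₀, hv₀d⟩ := hdeep
    replace hv₀d : F.depth v₀ = d := by have := hdep v₀ hv₀; omega
    have half : ∀ {z : V} (r : G.Walk v₀ z), r.IsPath → r.support ⊆ w.support →
        r.length + 1 ≤ 2 ^ n := by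
      intro z r hr hrw
      cases r with
      | nil => exact Nat.one_le_two_pow
      | cons _ r' =>
        rw [cons_isPath_iff] at hr
        suffices r'.length + 2 ≤ 2 ^ n by rw [length_cons]; omega
        refine ih (d + 1) r' hr.1 fun x hx => ?_
        have hxw : x ∈ w.support := hrw (List.mem_cons_of_mem _ hx)
        have hxd : F.depth x ≠ d := fun hxd => hr.2 <|
          hsub.eq_of_mem_support_of_depth_eq w (fun y hy => (hdep y hy).1) hxw hv₀ hxd hv₀d ▸ hx
        have := hdep x hxw
        omega
    obtain ⟨p, q, rfl⟩ := mem_support_iff_exists_append.mp hv₀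
    have hp := half p.reverse (isPath_reverse_iff p |>.mpr hw.of_append_left) <| by
      rw [support_reverse]
      exact fun x hx => support_subset_support_append_left p q (List.mem_reverse.mp hx)
    have hq := half q hw.of_append_right (support_subset_support_append_right p q)
    rw [length_reverse] at hp
    rw [length_append, pow_succ]
    omega

theorem InClosure.length_add_two_le (hsub : InClosure G F) {h : ℕ} (hh : ∀ v, F.depth v ≤ h)
    {u v : V} {w : G.Walk u v} (hw : w.IsPath) : w.length + 2 ≤ 2 ^ (h + 1) :=
  hsub.length_add_two_le_of_depth_mem (h + 1) 0 w hw fun x _ =>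
    ⟨Nat.zero_le _, by have := hh x; omega⟩

theorem InClosure.length_add_two_le_two_pow_treedepth (hsub : InClosure G F) {h : ℕ}
    (hh : ∀ v, F.depth v ≤ h) {u v : V} {w : G.Walk u v} (hw : w.IsPath) :
    w.length + 2 ≤ 2 ^ treedepth G := by
  obtain ⟨F', hF'h, hF'G⟩ :=
    Nat.sInf_mem (s := {k | ∃ F : RForest V, (∀ v, F.depth v ≤ k) ∧ InClosure G F}) ⟨h, F, hh, hsub⟩
  rw [treedepth, Nat.add_comm 1]
  exact hF'G.length_add_two_le hF'h hw

end Closure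

def pathForest (n : ℕ) : RForest (Fin n) where
  parent v := ⟨v - 1, by omega⟩
  depth v := v
  parent_depth _ _ := rfl
  root_parent v hv := Fin.ext (by simp [hv])

theorem pathForest_anc_of_succ_eq {n : ℕ} {u v : Fin n} (h : u.val + 1 = v.val) :
    (pathForest n).Anc u v :=
  ⟨1, one_pos, show 1 ≤ v.val by omega, Fin.ext (show v.val - 1 = u.val by omega)⟩

theorem inClosure_pathGraph_pathForest (n : ℕ) : InClosure (pathGraph n) (pathForest n) :=
  fun _ _ huv => (pathGraph_adj.mp huv).imp pathForest_anc_of_succ_eq pathForest_anc_of_succ_eq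

theorem pathGraph_val_le_val_add_length {n : ℕ} {u v : Fin n} (w : (pathGraph n).Walk u v) :
    v.val ≤ u.val + w.length := by
  induction w with
  | nil => simp
  | cons h _ ih =>
    rw [pathGraph_adj] at h
    rw [length_cons]
    omega

theorem clog_le_treedepth_pathGraph (n : ℕ) : Nat.clog 2 (n + 1) ≤ treedepth (pathGraph n) := by
  classical
  cases n with
  | zero => simp
  | succ n =>
    obtain ⟨w⟩ := pathGraph_preconnected (n + 1) 0 (Fin.last n)
    have hlen : n ≤ w.bypass.length := by
      simpa using pathGraph_val_le_val_add_length w.bypass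
    have := (inClosure_pathGraph_pathForest (n + 1)).length_add_two_le_two_pow_treedepth
      (fun v => Nat.lt_succ_iff.mp v.isLt) w.bypass_isPath
    exact (Nat.clog_le_iff_le_pow one_lt_two).mpr (by omega)

/-- If G is a subgraph of the closure of a rooted forest of height ≤ h, then G
has no path with more than 2^{h+1} − 2 edges; equivalently, the path on n
vertices has tree-depth at least ⌈log₂(n+1)⌉. -/
theorem stmt14 {V : Type*} (G : SimpleGraph V) (F : RForest V) (h : ℕ)
    (hh : ∀ v, F.depth v ≤ h) (hsub : InClosure G F) :
    (∀ (u v : V) (w : G.Walk u v), w.IsPath → w.length ≤ 2 ^ (h + 1) - 2) ∧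
    ∀ n : ℕ, Nat.clog 2 (n + 1) ≤ treedepth (SimpleGraph.pathGraph n) := by
  refine ⟨fun u v w hw => ?_, clog_le_treedepth_pathGraph⟩
  have := hsub.length_add_two_le hh hw
  omega
end
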